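/- arXiv:2305.10562 — 10 statements merged into one kernel-verified Lean document; each statement's English description precedes it below -/
import Mathlib

section
/- Let M be an n×n real symmetric orthogonal matrix written in block form M = [[C, B],[B^T, D]] where C is m×m symmetric, B is m×k with no zero columns, and D = diag(d_1,...,d_k). Then the columns b_1,...,b_k of B are pairwise orthogonal, k ≤ m, and for each i, C b_i = -d_i b_i. -/
/-!
Read blockwise, `M * M = 1` gives `C * B + B * D = 0`, i.e. `C bᵢ = -dᵢ bᵢ`, and
`Bᵀ * B = 1 - D * D`, so the Gram matrix `Bᵀ * B` of the columns is diagonal. Its diagonal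
entries `bᵢ ⬝ᵥ bᵢ` are nonzero, hence `k = rank (Bᵀ * B) = rank B ≤ m`.
-/

open Matrix

namespace Matrix

variable {m n R : Type*} [Fintype m] [Fintype n] [DecidableEq n]

theorem fromBlocks_mul_self_eq_one [DecidableEq m] [NonAssocSemiring R]
    {A : Matrix m m R} {B : Matrix m n R} {C : Matrix n m R} {D : Matrix n n R}
    (h : fromBlocks A B C D * fromBlocks A B C D = 1) :
    A * B + B * D = 0 ∧ C * B + D * D = 1 := by
  rw [fromBlocks_multiply, ← fromBlocks_one, fromBlocks_inj] at h
  exact ⟨h.2.1, h.2.2.2⟩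

theorem mulVec_col_eq_neg_smul_of_mul_add_mul_diagonal_eq_zero [CommRing R]
    {C : Matrix m m R} {B : Matrix m n R} {d : n → R} (h : C * B + B * diagonal d = 0)
    (i : n) : C *ᵥ (fun r => B r i) = (-d i) • fun r => B r i := by
  ext r
  have hri : (C * B) r i + B r i * d i = 0 := by
    simpa only [add_apply, mul_diagonal, zero_apply] using congrFun (congrFun h r) i
  rw [Pi.smul_apply, smul_eq_mul, neg_mul, mul_comm, ← eq_neg_of_add_eq_zero_left hri]
  rfl

theorem card_le_of_isDiag_transpose_mul_self [Field R] [LinearOrder R] [IsStrictOrderedRing R]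
    (B : Matrix m n R) (hdiag : (Bᵀ * B).IsDiag) (hcol : ∀ j, (fun i => B i j) ≠ 0) :
    Fintype.card n ≤ Fintype.card m := by
  have hdiag_ne : ∀ j, (Bᵀ * B) j j ≠ 0 := fun j => dotProduct_self_eq_zero.not.mpr (hcol j)
  calc Fintype.card n = Fintype.card {j // diag (Bᵀ * B) j ≠ 0} :=
        (Fintype.card_congr (Equiv.subtypeUnivEquiv hdiag_ne)).symm
    _ = (Bᵀ * B).rank := by rw [← rank_diagonal, hdiag.diagonal_diag]
    _ = B.rank := rank_transpose_mul_self B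
    _ ≤ Fintype.card m := rank_le_card_height B

end Matrix

theorem stmt_0_general {m k : ℕ} (C : Matrix (Fin m) (Fin m) ℝ) (B : Matrix (Fin m) (Fin k) ℝ)
    (d : Fin k → ℝ)
    (hB : ∀ j : Fin k, (fun i => B i j) ≠ (0 : Fin m → ℝ))
    (hM : (Matrix.fromBlocks C B Bᵀ (Matrix.diagonal d)) *
          (Matrix.fromBlocks C B Bᵀ (Matrix.diagonal d)) = 1) :
    (∀ i j : Fin k, i ≠ j → (fun r => B r i) ⬝ᵥ (fun r => B r j) = 0) ∧
    k ≤ m ∧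
    (∀ i : Fin k, C.mulVec (fun r => B r i) = (-(d i)) • (fun r => B r i)) := by
  obtain ⟨hCB, hBB⟩ := fromBlocks_mul_self_eq_one hM
  have hdiag : (Bᵀ * B).IsDiag := by
    rw [eq_sub_of_add_eq hBB, diagonal_mul_diagonal]
    exact isDiag_one.sub (isDiag_diagonal _)
  refine ⟨fun i j hij => hdiag hij, ?_, mulVec_col_eq_neg_smul_of_mul_add_mul_diagonal_eq_zero hCB⟩
  simpa using card_le_of_isDiag_transpose_mul_self B hdiag hB

/-- If the symmetric block matrix `M = [[C, B], [Bᵀ, D]]` (with `C`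
symmetric `m × m`, `B` an `m × k` matrix with no zero columns, and `D = diag d`)
is orthogonal, then the columns of `B` are pairwise orthogonal, `k ≤ m`, and each
column `bᵢ` of `B` satisfies `C bᵢ = (-dᵢ) bᵢ`. -/
theorem stmt_0 {m k : ℕ} (C : Matrix (Fin m) (Fin m) ℝ) (B : Matrix (Fin m) (Fin k) ℝ)
    (d : Fin k → ℝ) (hC : C.IsSymm)
    (hB : ∀ j : Fin k, (fun i => B i j) ≠ (0 : Fin m → ℝ))
    (hM : (Matrix.fromBlocks C B Bᵀ (Matrix.diagonal d)) *
          (Matrix.fromBlocks C B Bᵀ (Matrix.diagonal d)) = 1) :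
    (∀ i j : Fin k, i ≠ j → (fun r => B r i) ⬝ᵥ (fun r => B r j) = 0) ∧
    k ≤ m ∧
    (∀ i : Fin k, C.mulVec (fun r => B r i) = (-(d i)) • (fun r => B r i)) :=
  stmt_0_general C B d hB hM
end

section
/- Let G be a connected bipartite graph with bipartition V = V_1 ∪ V_2 where |V_1| = |V_2| = m. If B is an m×m real matrix with orthogonal rows and columns (B B^T = B^T B = I) whose zero pattern matches the bipartite adjacency structure of G (i.e., B_{ij} ≠ 0 iff the i-th vertex of V_1 is adjacent to the j-th vertex of V_2), then the matrix M = (1/√2)·[[I, B],[B^T, -I]] is a symmetric orthogonal matrix whose off-diagonal zero pattern matches the adjacency matrix of G; in particular M has exactly two distinct eigenvalues, 1 and -1. -/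
/-! Orthogonality of `B` gives `fromBlocks 1 B Bᵀ (-1) ^ 2 = 2 • 1` (the off-diagonal blocks
`B - B` cancel), so `M` is an involution. An involution other than
`±1` has spectrum exactly `{1, -1}`: `x ∈ σ M` forces `x ^ 2 ∈ σ 1`, while `(1 - M) (1 + M) = 0`
shows that neither `1 ∓ M` is invertible. -/

open Matrix

namespace Matrix

variable {α β R : Type*} [DecidableEq α] [DecidableEq β]

theorem fromBlocks_one_neg_one_mul_self [Fintype α] [Fintype β] [CommRing R] {B : Matrix α β R}
    (hB₁ : B * Bᵀ = 1) (hB₂ : Bᵀ * B = 1) :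
    fromBlocks 1 B Bᵀ (-1) * fromBlocks 1 B Bᵀ (-1) = (2 : R) • 1 := by
  rw [fromBlocks_multiply, ← fromBlocks_one, fromBlocks_smul]
  simp [hB₁, hB₂, two_smul]

theorem smul_fromBlocks_one_neg_one_ne_smul_one [Ring R] [NoZeroDivisors R] [CharZero R]
    [Nonempty α] [Nonempty β] {c : R} (hc : c ≠ 0) (B : Matrix α β R) (C : Matrix β α R)
    (r : R) : c • fromBlocks 1 B C (-1) ≠ r • 1 := by
  obtain ⟨i⟩ := ‹Nonempty α›
  obtain ⟨j⟩ := ‹Nonempty β›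
  intro h
  have hi := congr_fun₂ h (.inl i) (.inl i)
  have hj := congr_fun₂ h (.inr j) (.inr j)
  simp only [smul_apply, fromBlocks_apply₁₁, fromBlocks_apply₂₂, one_apply_eq, neg_apply,
    smul_eq_mul, mul_one, mul_neg] at hi hj
  exact hc (self_eq_neg.mp (hi.trans hj.symm))

theorem fromBlocks_one_neg_one_apply_ne_zero_iff_adj [Ring R] {G : SimpleGraph (α ⊕ β)}
    (hα : ∀ i j, ¬ G.Adj (.inl i) (.inl j)) (hβ : ∀ i j, ¬ G.Adj (.inr i) (.inr j))
    {B : Matrix α β R} (hB : ∀ i j, B i j ≠ 0 ↔ G.Adj (.inl i) (.inr j))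
    {u v : α ⊕ β} (huv : u ≠ v) :
    fromBlocks 1 B Bᵀ (-1) u v ≠ 0 ↔ G.Adj u v := by
  rcases u with i | i <;> rcases v with j | j
  · simp [one_apply_ne (fun h => huv (congrArg _ h)), hα]
  · simp [hB]
  · simp [hB, G.adj_comm]
  · simp [one_apply_ne (fun h => huv (congrArg _ h)), hβ]

end Matrix

theorem spectrum_eq_one_neg_one_of_mul_self_eq_one {𝕜 A : Type*} [Field 𝕜] [Ring A]
    [Algebra 𝕜 A] {a : A} (ha : a * a = 1) (h1 : a ≠ 1) (hneg1 : a ≠ -1) :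
    spectrum 𝕜 a = {1, -1} := by
  have : Nontrivial A := ⟨⟨a, 1, h1⟩⟩
  refine Set.Subset.antisymm (fun x hx => ?_) ?_
  · have hx2 : x ^ 2 ∈ spectrum 𝕜 (1 : A) := by
      simpa only [sq, ha] using spectrum.pow_mem_pow a 2 hx
    simpa [spectrum.one_eq] using hx2
  rintro x (rfl | rfl) <;> rw [spectrum.mem_iff] <;> intro hunit
  · rw [map_one] at hunit
    have h : (1 - a) * (1 + a) = 0 := by noncomm_ring; simp [ha]
    exact hneg1 (eq_neg_of_add_eq_zero_right (hunit.mul_right_eq_zero.mp h))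
  · rw [map_neg, map_one, ← neg_add', IsUnit.neg_iff] at hunit
    have h : (1 + a) * (1 - a) = 0 := by noncomm_ring; simp [ha]
    exact h1 (sub_eq_zero.mp (hunit.mul_right_eq_zero.mp h)).symm

/-- Let `G` be a connected bipartite graph on `V₁ ⊕ V₂` with
`|V₁| = |V₂| = m` (all edges go between the two parts).  If `B` is an `m × m`
real matrix with orthogonal rows and columns whose zero pattern matches the
bipartite adjacency structure of `G`, then `M = (1/√2)·[[I, B], [Bᵀ, -I]]`
is a symmetric orthogonal matrix whose off-diagonal zero pattern matches the
adjacency of `G`; in particular `M` has exactly two distinct eigenvalues,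
`1` and `-1`. -/
theorem stmt_2 {m : ℕ} (G : SimpleGraph (Fin m ⊕ Fin m)) (hconn : G.Connected)
    (hbip : ∀ i j : Fin m, ¬ G.Adj (Sum.inl i) (Sum.inl j) ∧ ¬ G.Adj (Sum.inr i) (Sum.inr j))
    (B : Matrix (Fin m) (Fin m) ℝ)
    (hB1 : B * Bᵀ = 1) (hB2 : Bᵀ * B = 1)
    (hpat : ∀ i j : Fin m, B i j ≠ 0 ↔ G.Adj (Sum.inl i) (Sum.inr j)) :
    let M : Matrix (Fin m ⊕ Fin m) (Fin m ⊕ Fin m) ℝ :=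
      (Real.sqrt 2)⁻¹ • Matrix.fromBlocks 1 B Bᵀ (-1)
    M.IsSymm ∧ M * M = 1 ∧
    (∀ u v : Fin m ⊕ Fin m, u ≠ v → (M u v ≠ 0 ↔ G.Adj u v)) ∧
    spectrum ℝ M = {1, -1} := by
  intro M
  have hc : (Real.sqrt 2)⁻¹ ≠ 0 := by positivity
  have hM_sq : M * M = 1 := by
    rw [smul_mul_smul_comm, fromBlocks_one_neg_one_mul_self hB1 hB2, smul_smul, ← mul_inv,
      Real.mul_self_sqrt zero_le_two, inv_mul_cancel₀ two_ne_zero, one_smul]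
  have : Nonempty (Fin m) := by obtain ⟨v | v⟩ := hconn.nonempty <;> exact ⟨v⟩
  have hM_ne := smul_fromBlocks_one_neg_one_ne_smul_one hc B Bᵀ
  refine ⟨(IsSymm.fromBlocks isSymm_one rfl isSymm_one.neg).smul _, hM_sq,
    fun u v huv => ?_, spectrum_eq_one_neg_one_of_mul_self_eq_one hM_sq ?_ ?_⟩
  · simpa [M, hc] using
      fromBlocks_one_neg_one_apply_ne_zero_iff_adj (fun i j => (hbip i j).1)
        (fun i j => (hbip i j).2) hpat huv
  · simpa using hM_ne 1
  · simpa using hM_ne (-1)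
end

section
/- Let G be a connected 4-regular graph on n vertices with diameter 2 such that every vertex in the second distance set N_2(v) of any vertex v has at least two neighbors in N_1(v). Then n ≤ 11. -/
/-!
Fix a vertex `v`. By the diameter bound every vertex is `v`, a neighbour of `v`, or lies in the
sphere `N₂(v)`, so `n ≤ 1 + 4 + |N₂(v)|`. Counting the edges between `N₁(v)` and `N₂(v)`: each
vertex of `N₂(v)` sends at least two of them, while each neighbour of `v` sends at most `4 - 1 = 3`,
one of its edges going to `v`. Hence `2 |N₂(v)| ≤ 12` and `n ≤ 11`.
-/

open Finset

namespace SimpleGraph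

variable {V : Type*} [Fintype V] (G : SimpleGraph V)

/-- For `k = 0` this also contains the vertices not reachable from `v`, since `G.dist` is `0` there. -/
noncomputable def distSphere (v : V) (k : ℕ) : Finset V := {x | G.dist v x = k}

variable {G}

@[simp]
theorem mem_distSphere {v x : V} {k : ℕ} : x ∈ G.distSphere v k ↔ G.dist v x = k := by
  simp [distSphere]

variable [DecidableEq V] [DecidableRel G.Adj]

theorem card_filter_adj_distSphere_two_le {u v : V} (huv : G.Adj u v) :
    #({x ∈ G.distSphere v 2 | G.Adj x u}) ≤ G.degree u - 1 := by
  have hsub : {x ∈ G.distSphere v 2 | G.Adj x u} ⊆ (G.neighborFinset u).erase v := by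
    intro x hx
    simp only [mem_filter, mem_distSphere] at hx
    refine mem_erase.mpr ⟨?_, (G.mem_neighborFinset u x).mpr hx.2.symm⟩
    rintro rfl
    simp at hx
  calc #({x ∈ G.distSphere v 2 | G.Adj x u}) ≤ #((G.neighborFinset u).erase v) := card_le_card hsub
    _ = G.degree u - 1 := by
      rw [card_erase_of_mem ((G.mem_neighborFinset u v).mpr huv), card_neighborFinset_eq_degree]

theorem card_distSphere_two_mul_le {d m : ℕ} (hreg : G.IsRegularOfDegree d) (v : V)
    (hm : ∀ x ∈ G.distSphere v 2, m ≤ #(G.neighborFinset x ∩ G.neighborFinset v)) :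
    #(G.distSphere v 2) * m ≤ d * (d - 1) := by
  have hdouble := card_mul_le_card_mul (s := G.distSphere v 2) (t := G.neighborFinset v)
    (m := m) (n := d - 1) G.Adj ?above ?below
  · rwa [card_neighborFinset_eq_degree, hreg v] at hdouble
  case above =>
    intro x hx
    convert hm x hx using 2
    ext u
    simp [bipartiteAbove, and_comm]
  case below =>
    intro u hu
    rw [← hreg u]
    exact card_filter_adj_distSphere_two_le ((G.mem_neighborFinset v u).mp hu).symm

theorem card_le_of_forall_dist_le_two (hconn : G.Connected) {v : V}
    (hv : ∀ x, G.dist v x ≤ 2) : Fintype.card V ≤ 1 + G.degree v + #(G.distSphere v 2) := by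
  have hcover : (univ : Finset V) ⊆ {v} ∪ G.neighborFinset v ∪ G.distSphere v 2 := by
    intro x _
    have hx := hv x
    interval_cases h : G.dist v x
    · simp [(hconn.dist_eq_zero_iff.mp h).symm]
    · simp [dist_eq_one_iff_adj.mp h]
    · simp [h]
  calc Fintype.card V ≤ #({v} ∪ G.neighborFinset v ∪ G.distSphere v 2) := card_le_card hcover
    _ ≤ #({v} ∪ G.neighborFinset v) + #(G.distSphere v 2) := card_union_le _ _
    _ ≤ 1 + G.degree v + #(G.distSphere v 2) := by
      grw [card_union_le, card_singleton, card_neighborFinset_eq_degree]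

end SimpleGraph

/-- Let `G` be a connected `4`-regular graph on `n` vertices with
diameter `2` such that for every vertex `v`, every vertex `x` at distance `2` from
`v` has at least two neighbors among the neighbors of `v`.  Then `n ≤ 11`. -/
theorem stmt_5 {n : ℕ} (G : SimpleGraph (Fin n)) [DecidableRel G.Adj]
    (hconn : G.Connected) (hreg : G.IsRegularOfDegree 4)
    (hdiam : (∀ u w : Fin n, G.dist u w ≤ 2) ∧ ∃ u w : Fin n, G.dist u w = 2)
    (hpred : ∀ v x : Fin n, G.dist v x = 2 →
      2 ≤ ((G.neighborFinset x) ∩ (G.neighborFinset v)).card) :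
    n ≤ 11 := by
  obtain ⟨hdist, v, -, -⟩ := hdiam
  have hsphere := G.card_distSphere_two_mul_le hreg v fun x hx ↦
    hpred v x (SimpleGraph.mem_distSphere.mp hx)
  have hcard := G.card_le_of_forall_dist_le_two hconn (hdist v)
  rw [Fintype.card_fin, hreg v] at hcard
  omega
end

section
/- There is no real symmetric orthogonal 9×9 matrix M whose off-diagonal zero pattern matches the adjacency matrix of the circulant-like graph R_{9,1}, whose edge set is the union of the 9-cycle (1,2,...,9,1) and the three triangles (1,4,7), (2,5,8), (3,6,9). Equivalently, q(R_{9,1}) > 2. -/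
/-!
Let `M * M = 1` with the off-diagonal support of `M` the edge set of `R_{9,1}`. For
`u ≠ v`, the `(u, v)` entry of `M * M` is `M u v * (M u u + M v v)` plus one term for each
common neighbour of `u` and `v`. Consecutive vertices of the 9-cycle have no common neighbour,
so the diagonal alternates in sign along the cycle and `M 0 0 + M 3 3 = 0`. But `0` and `3`
have exactly one common neighbour, `6`, whose term `M 0 6 * M 6 3` is then forced to vanish.
-/

open Matrix Finset

namespace Matrix

variable {n R : Type*} [Fintype n] [DecidableEq n] [CommRing R]

theorem mul_self_apply_of_ne (M : Matrix n n R) {u v : n} (huv : u ≠ v) :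
    (M * M) u v = M u v * (M u u + M v v) + ∑ k ∈ (univ.erase u).erase v, M u k * M k v := by
  rw [mul_apply, ← Finset.add_sum_erase _ _ (mem_univ u),
    ← Finset.add_sum_erase _ _ (mem_erase.2 ⟨huv.symm, mem_univ v⟩)]
  ring

variable [NoZeroDivisors R] {M : Matrix n n R} {adj : n → n → Prop}

theorem diag_add_diag_eq_zero_of_no_common_neighbor (hsq : M * M = 1)
    (hpat : ∀ u v, u ≠ v → (M u v ≠ 0 ↔ adj u v)) {u v : n} (huv : u ≠ v) (hadj : adj u v)
    (hno : ∀ k, k ≠ u → k ≠ v → ¬(adj u k ∧ adj k v)) :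
    M u u + M v v = 0 := by
  have hsum : ∑ k ∈ (univ.erase u).erase v, M u k * M k v = 0 := by
    refine sum_eq_zero fun k hk => ?_
    obtain ⟨hkv, hku⟩ : k ≠ v ∧ k ≠ u := by simpa using hk
    by_contra hne
    obtain ⟨h₁, h₂⟩ := mul_ne_zero_iff.1 hne
    exact hno k hku hkv ⟨(hpat u k hku.symm).1 h₁, (hpat k v hkv).1 h₂⟩
  have h := M.mul_self_apply_of_ne huv
  rw [hsq, one_apply_ne huv, hsum, add_zero, eq_comm] at h
  exact (mul_eq_zero.1 h).resolve_left ((hpat u v huv).2 hadj)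

theorem diag_add_diag_ne_zero_of_unique_common_neighbor (hsq : M * M = 1)
    (hpat : ∀ u v, u ≠ v → (M u v ≠ 0 ↔ adj u v)) {u v w : n} (huv : u ≠ v)
    (hwu : w ≠ u) (hwv : w ≠ v) (hadj_uw : adj u w) (hadj_wv : adj w v)
    (hno : ∀ k, k ≠ u → k ≠ v → k ≠ w → ¬(adj u k ∧ adj k v)) :
    M u u + M v v ≠ 0 := by
  intro hdiag
  have hsum : ∑ k ∈ (univ.erase u).erase v, M u k * M k v = M u w * M w v := by
    refine sum_eq_single_of_mem w (by simp [hwu, hwv]) fun k hk hkw => ?_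
    obtain ⟨hkv, hku⟩ : k ≠ v ∧ k ≠ u := by simpa using hk
    by_contra hne
    obtain ⟨h₁, h₂⟩ := mul_ne_zero_iff.1 hne
    exact hno k hku hkv hkw ⟨(hpat u k hku.symm).1 h₁, (hpat k v hkv).1 h₂⟩
  have h := M.mul_self_apply_of_ne huv
  rw [hsq, one_apply_ne huv, hsum, hdiag, mul_zero, zero_add, eq_comm] at h
  exact mul_ne_zero ((hpat u w hwu.symm).2 hadj_uw) ((hpat w v hwv).2 hadj_wv) h

end Matrix

abbrev R91Adj (u v : ZMod 9) : Prop := u - v = 1 ∨ u - v = -1 ∨ u - v = 3 ∨ u - v = -3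

/-- There is no real symmetric orthogonal `9 × 9` matrix whose
off-diagonal zero pattern matches the adjacency of the graph `R_{9,1}`, i.e. the
graph on `ℤ/9ℤ` whose edges are the 9-cycle (differences `±1`) together with the
three triangles `(1,4,7)`, `(2,5,8)`, `(3,6,9)` (differences `±3`).
Equivalently, `q(R_{9,1}) > 2`. -/
theorem stmt_8 :
    ¬ ∃ M : Matrix (ZMod 9) (ZMod 9) ℝ, M.IsSymm ∧ M * M = 1 ∧
      (∀ u v : ZMod 9, u ≠ v →
        (M u v ≠ 0 ↔ (u - v = 1 ∨ u - v = -1 ∨ u - v = 3 ∨ u - v = -3))) := by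
  rintro ⟨M, -, hsq, hpat⟩
  have hcycle : ∀ i : ZMod 9, M i i + M (i + 1) (i + 1) = 0 := fun i =>
    diag_add_diag_eq_zero_of_no_common_neighbor (adj := R91Adj) hsq hpat
      (by revert i; decide) (by revert i; decide) (by revert i; decide)
  have h01 : M 0 0 + M 1 1 = 0 := hcycle 0
  have h12 : M 1 1 + M 2 2 = 0 := hcycle 1
  have h23 : M 2 2 + M 3 3 = 0 := hcycle 2
  have h03 : M 0 0 + M 3 3 = 0 := by linarith
  exact diag_add_diag_ne_zero_of_unique_common_neighbor (adj := R91Adj) hsq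
    hpat (w := 6) (by decide) (by decide) (by decide) (by decide) (by decide) (by decide) h03
end

section
/- Suppose M is a real symmetric orthogonal matrix with graph G (off-diagonal zero pattern of M equals adjacency of G). If {u,w} is an edge of G that is not contained in any triangle of G, then the diagonal entries of M satisfy M_{uu} = -M_{ww}. -/
open Matrix

/-! The `(u, w)` entry of `M * M = 1` vanishes. Since `u` and `w` have no common neighbour, every
term `M u t * M t w` with `t ≠ u, w` vanishes, so this entry is `M u w * (M u u + M w w)`, and
`M u w ≠ 0` because `u` and `w` are adjacent. -/

namespace Matrix

variable {V R : Type*} [Fintype V] [NonUnitalNonAssocSemiring R]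

theorem mul_apply_eq_add_of_ne {M N : Matrix V V R} {u w : V} (huw : u ≠ w)
    (h : ∀ t, t ≠ u → t ≠ w → M u t * N t w = 0) :
    (M * N) u w = M u u * N u w + M u w * N w w := by
  rw [mul_apply, Finset.sum_eq_add_of_mem u w (Finset.mem_univ u) (Finset.mem_univ w) huw]
  exact fun t _ ht => h t ht.1 ht.2

theorem mul_self_apply_of_adj_of_forall_not_adj_adj (G : SimpleGraph V) {M : Matrix V V R}
    (hsupp : ∀ a b, a ≠ b → M a b ≠ 0 → G.Adj a b) {u w : V} (huw : G.Adj u w)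
    (htri : ∀ t, ¬ (G.Adj u t ∧ G.Adj t w)) :
    (M * M) u w = M u u * M u w + M u w * M w w :=
  mul_apply_eq_add_of_ne huw.ne fun t htu htw => by
    by_contra h
    exact htri t ⟨hsupp u t htu.symm (left_ne_zero_of_mul h), hsupp t w htw (right_ne_zero_of_mul h)⟩

end Matrix

theorem stmt_9_general {V : Type*} [Fintype V] [DecidableEq V] (G : SimpleGraph V)
    (M : Matrix V V ℝ) (horth : M * M = 1)
    (hpat : ∀ u v : V, u ≠ v → (M u v ≠ 0 ↔ G.Adj u v))
    (u w : V) (huw : G.Adj u w)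
    (htri : ∀ t : V, ¬ (G.Adj u t ∧ G.Adj t w)) :
    M u u = -(M w w) := by
  have hMuw : M u w ≠ 0 := (hpat u w huw.ne).mpr huw
  have hentry := mul_self_apply_of_adj_of_forall_not_adj_adj G (fun a b hab => (hpat a b hab).mp)
    huw htri
  rw [horth, one_apply_ne huw.ne] at hentry
  have hprod : M u w * (M u u + M w w) = 0 := by linear_combination -hentry
  exact eq_neg_of_add_eq_zero_left ((mul_eq_zero.mp hprod).resolve_left hMuw)

/-- If `M` is a real symmetric orthogonal matrix whose off-diagonal
zero pattern matches the adjacency of a graph `G`, and `{u,w}` is an edge of `G`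
contained in no triangle of `G`, then `M u u = -(M w w)`. -/
theorem stmt_9 {V : Type*} [Fintype V] [DecidableEq V] (G : SimpleGraph V)
    (M : Matrix V V ℝ) (hsymm : M.IsSymm) (horth : M * M = 1)
    (hpat : ∀ u v : V, u ≠ v → (M u v ≠ 0 ↔ G.Adj u v))
    (u w : V) (huw : G.Adj u w)
    (htri : ∀ t : V, ¬ (G.Adj u t ∧ G.Adj t w)) :
    M u u = -(M w w) :=
  stmt_9_general G M horth hpat u w huw htri
end

section
/- Suppose M is a real symmetric orthogonal matrix with graph G. If u and w are nonadjacent vertices of G with exactly one common neighbor t, then a contradiction arises: M_{ut} M_{tw} = 0 with both factors nonzero. Consequently, if G contains a unique shortest path of length 2 between some pair of nonadjacent vertices, then q(G) > 2. -/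
open Matrix

/-! A unique common neighbour `t` of the nonadjacent vertices `u ≠ w` leaves a single
nonzero term `M u t * M t w` in the expansion of `(M * M) u w`, whereas `M * M = 1`
forces this off-diagonal entry to vanish. -/

theorem Matrix.mul_apply_eq_of_forall_ne {l m n R : Type*} [Fintype m]
    [NonUnitalNonAssocSemiring R] {A : Matrix l m R} {B : Matrix m n R} {i : l} {j : n}
    (t : m) (h : ∀ k, k ≠ t → A i k * B k j = 0) :
    (A * B) i j = A i t * B t j := by
  rw [mul_apply]
  exact Finset.sum_eq_single t (fun k _ hk => h k hk) (by simp)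

def Matrix.HasGraph {V R : Type*} [Zero R] (M : Matrix V V R) (G : SimpleGraph V) : Prop :=
  ∀ x y : V, x ≠ y → (M x y ≠ 0 ↔ G.Adj x y)

namespace Matrix.HasGraph

variable {V R : Type*} [Fintype V] [NonUnitalNonAssocSemiring R] [NoZeroDivisors R]
  {G : SimpleGraph V} {M : Matrix V V R} {u w t : V}

theorem mul_self_apply_eq (hM : M.HasGraph G) (hne : u ≠ w) (hnadj : ¬ G.Adj u w)
    (huniq : ∀ k, G.Adj u k ∧ G.Adj k w → k = t) :
    (M * M) u w = M u t * M t w := by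
  have hMuw : M u w = 0 := not_not.mp fun h => hnadj ((hM u w hne).mp h)
  refine mul_apply_eq_of_forall_ne t fun k hkt => ?_
  by_contra hprod
  obtain ⟨huk, hkw⟩ := mul_ne_zero_iff.mp hprod
  have hu : u ≠ k := by rintro rfl; exact hkw hMuw
  have hw : k ≠ w := by rintro rfl; exact huk hMuw
  exact hkt (huniq k ⟨(hM u k hu).mp huk, (hM k w hw).mp hkw⟩)

theorem mul_self_apply_ne_zero (hM : M.HasGraph G) (hne : u ≠ w) (hnadj : ¬ G.Adj u w)
    (huniq : ∃! t, G.Adj u t ∧ G.Adj t w) :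
    (M * M) u w ≠ 0 := by
  obtain ⟨t, ⟨hut, htw⟩, ht⟩ := huniq
  rw [hM.mul_self_apply_eq hne hnadj ht]
  exact mul_ne_zero ((hM u t hut.ne).mpr hut) ((hM t w htw.ne).mpr htw)

end Matrix.HasGraph

/-- If a graph `G` contains a unique shortest path of length `2`
between some pair of nonadjacent vertices (i.e. nonadjacent `u ≠ w` with exactly one
common neighbor), then there is no real symmetric orthogonal matrix whose
off-diagonal zero pattern matches the adjacency of `G`; that is, `q(G) > 2`. -/
theorem stmt_10 {V : Type*} [Fintype V] [DecidableEq V] (G : SimpleGraph V)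
    (u w : V) (hne : u ≠ w) (hnadj : ¬ G.Adj u w)
    (huniq : ∃! t : V, G.Adj u t ∧ G.Adj t w) :
    ¬ ∃ M : Matrix V V ℝ, M.IsSymm ∧ M * M = 1 ∧
      (∀ x y : V, x ≠ y → (M x y ≠ 0 ↔ G.Adj x y)) := by
  rintro ⟨M, -, hMM, hM⟩
  have hM : M.HasGraph G := hM
  exact hM.mul_self_apply_ne_zero hne hnadj huniq (by rw [hMM, one_apply_ne hne])
end

section
/- For m, n ≥ 3 there is no real symmetric orthogonal matrix in S(K_m □ K_n); that is, q(K_m □ K_n) ≥ 3. -/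
/-!
If `(i, j)` and `(i', j')` differ in both coordinates, the off-diagonal entry
`(M * M) (i, j) (i', j')` has just two surviving terms, through `(i, j')` and through `(i', j)`,
so they cancel. Multiplying these relations around a triangle of rows `i₁ i₂ i₃` shows that the
product of `M` around that triangle inside column `j` changes sign whenever the column changes. With three columns `j₁ j₂ j₃` this product therefore equals its own
negative, so it vanishes, although each of its factors is an edge entry and hence nonzero.
-/

open Matrix SimpleGraph

namespace Matrix

variable {α β R : Type*} [CommRing R]

theorem mul_apply_eq_add_of_support_rook [Fintype α] [Fintype β]
    {M N : Matrix (α × β) (α × β) R}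
    (hM : ∀ u v, u.1 ≠ v.1 → u.2 ≠ v.2 → M u v = 0)
    (hN : ∀ u v, u.1 ≠ v.1 → u.2 ≠ v.2 → N u v = 0)
    {i i' : α} {j j' : β} (hi : i ≠ i') (hj : j ≠ j') :
    (M * N) (i, j) (i', j') =
      M (i, j) (i, j') * N (i, j') (i', j') + M (i, j) (i', j) * N (i', j) (i', j') := by
  rw [mul_apply]
  refine Fintype.sum_eq_add _ _ (by simp [hi]) ?_
  rintro ⟨a, b⟩ ⟨hw₁, hw₂⟩
  by_cases ha : a = i
  · subst ha
    have hb : b ≠ j' := fun hb => hw₁ (by rw [hb])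
    rw [hN _ _ hi hb, mul_zero]
  by_cases hb : b = j
  · subst hb
    have ha' : a ≠ i' := fun ha' => hw₂ (by rw [ha'])
    rw [hN _ _ ha' hj, mul_zero]
  · rw [hM _ _ (Ne.symm ha) (Ne.symm hb), zero_mul]

def columnTriangle (M : Matrix (α × β) (α × β) R) (i₁ i₂ i₃ : α) (j : β) : R :=
  M (i₁, j) (i₂, j) * M (i₂, j) (i₃, j) * M (i₃, j) (i₁, j)

theorem columnTriangle_eq_neg [Fintype α] [Fintype β] [NoZeroDivisors R]
    {M : Matrix (α × β) (α × β) R}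
    (hM : ∀ u v, u.1 ≠ v.1 → u.2 ≠ v.2 → M u v = 0) (hM2 : (M * M).IsDiag)
    {i₁ i₂ i₃ : α} (h₁₂ : i₁ ≠ i₂) (h₂₃ : i₂ ≠ i₃) (h₃₁ : i₃ ≠ i₁)
    {j j' : β} (hj : j ≠ j') (hrow : ∀ i, M (i, j) (i, j') ≠ 0) :
    columnTriangle M i₁ i₂ i₃ j' = -columnTriangle M i₁ i₂ i₃ j := by
  have step : ∀ {i i'}, i ≠ i' →
      M (i, j) (i, j') * M (i, j') (i', j') = -(M (i, j) (i', j) * M (i', j) (i', j')) := by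
    intro i i' hi
    have h : (M * M) (i, j) (i', j') = 0 := hM2 (by simp [hi])
    rw [mul_apply_eq_add_of_support_rook hM hM hi hj] at h
    exact eq_neg_of_add_eq_zero_left h
  have hrows : M (i₁, j) (i₁, j') * M (i₂, j) (i₂, j') * M (i₃, j) (i₃, j') ≠ 0 :=
    mul_ne_zero (mul_ne_zero (hrow i₁) (hrow i₂)) (hrow i₃)
  refine mul_left_cancel₀ hrows ?_
  calc _ = (M (i₁, j) (i₁, j') * M (i₁, j') (i₂, j')) *
          (M (i₂, j) (i₂, j') * M (i₂, j') (i₃, j')) *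
          (M (i₃, j) (i₃, j') * M (i₃, j') (i₁, j')) := by unfold columnTriangle; ring
    _ = _ := by rw [step h₁₂, step h₂₃, step h₃₁]; unfold columnTriangle; ring

theorem not_isDiag_mul_self_of_boxProd_pattern [Fintype α] [Fintype β] [NoZeroDivisors R]
    [NeZero (2 : R)]
    (hα : 2 < Fintype.card α) (hβ : 2 < Fintype.card β) {M : Matrix (α × β) (α × β) R}
    (hpat : ∀ u v, u ≠ v → (M u v ≠ 0 ↔ (completeGraph α □ completeGraph β).Adj u v)) :
    ¬ (M * M).IsDiag := by
  intro hM2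
  have hzero : ∀ u v, u.1 ≠ v.1 → u.2 ≠ v.2 → M u v = 0 := fun u v h₁ h₂ => by
    by_contra h
    simpa [boxProd_adj, h₁, h₂] using (hpat u v (fun huv => h₁ (by rw [huv]))).1 h
  have hedge : ∀ u v, (completeGraph α □ completeGraph β).Adj u v → M u v ≠ 0 :=
    fun u v huv => (hpat u v huv.ne).2 huv
  obtain ⟨i₁, i₂, i₃, h₁₂, h₁₃, h₂₃⟩ := Fintype.two_lt_card_iff.1 hα
  obtain ⟨j₁, j₂, j₃, k₁₂, k₁₃, k₂₃⟩ := Fintype.two_lt_card_iff.1 hβ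
  set T := columnTriangle M i₁ i₂ i₃
  have hflip : ∀ {j j'}, j ≠ j' → T j' = -T j := fun {j j'} hj =>
    columnTriangle_eq_neg hzero hM2 h₁₂ h₂₃ h₁₃.symm hj
      fun i => hedge _ _ (boxProd_adj.2 (.inr ⟨hj, rfl⟩))
  have hcol : ∀ {i i'} j, i ≠ i' → M (i, j) (i', j) ≠ 0 :=
    fun _ hi => hedge _ _ (boxProd_adj.2 (.inl ⟨hi, rfl⟩))
  have hT : T j₁ ≠ 0 :=
    mul_ne_zero (mul_ne_zero (hcol j₁ h₁₂) (hcol j₁ h₂₃)) (hcol j₁ h₁₃.symm)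
  have h2T : 2 * T j₁ = 0 := by
    linear_combination hflip k₁₂ + hflip k₁₃ - hflip k₂₃
  exact hT ((mul_eq_zero.1 h2T).resolve_left two_ne_zero)

end Matrix

/-- For `m, n ≥ 3` there is no real symmetric orthogonal matrix
whose off-diagonal zero pattern matches the adjacency of the Cartesian product
`K_m □ K_n`; that is, `q(K_m □ K_n) ≥ 3`. -/
theorem stmt_11 {m n : ℕ} (hm : 3 ≤ m) (hn : 3 ≤ n) :
    ¬ ∃ M : Matrix (Fin m × Fin n) (Fin m × Fin n) ℝ, M.IsSymm ∧ M * M = 1 ∧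
      (∀ u v : Fin m × Fin n, u ≠ v →
        (M u v ≠ 0 ↔ ((SimpleGraph.completeGraph (Fin m)).boxProd (SimpleGraph.completeGraph (Fin n))).Adj u v)) := by
  rintro ⟨M, -, hM2, hpat⟩
  refine not_isDiag_mul_self_of_boxProd_pattern ?_ ?_ hpat (hM2 ▸ isDiag_one) <;>
    simpa using by omega
end

section
/- Let u = (a,b,c,d,0,0) and v = (x,y,z,w,0,0) be two rows of a 6×6 real orthogonal matrix B, with all of a,b,c,d,x,y,z,w nonzero, and suppose there exist three other rows of B whose first four coordinates are supported exactly on {3,4}, {2,3}, {1,2} respectively, with nonzero entries there. Then u and v are linearly dependent, contradicting the orthogonality of B. -/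
open Matrix

/-- Let `B` be a `6 × 6` real orthogonal matrix.  Suppose rows
`i₅` and `i₆` of `B` have nonzero entries in columns `1–4` and zeros in columns
`5, 6`, and that there are three further rows of `B` whose supports within the
first four columns are exactly `{3,4}`, `{2,3}` and `{1,2}` respectively (with
nonzero entries there).  Then rows `i₅` and `i₆` are forced to be scalar multiples
of one another, contradicting orthogonality: the configuration is impossible. -/
theorem stmt_12 (B : Matrix (Fin 6) (Fin 6) ℝ) (horth : B * Bᵀ = 1)
    (i2 i3 i4 i5 i6 : Fin 6)
    (hdist : i2 ≠ i3 ∧ i2 ≠ i4 ∧ i2 ≠ i5 ∧ i2 ≠ i6 ∧ i3 ≠ i4 ∧ i3 ≠ i5 ∧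
      i3 ≠ i6 ∧ i4 ≠ i5 ∧ i4 ≠ i6 ∧ i5 ≠ i6)
    (hu : B i5 0 ≠ 0 ∧ B i5 1 ≠ 0 ∧ B i5 2 ≠ 0 ∧ B i5 3 ≠ 0 ∧ B i5 4 = 0 ∧ B i5 5 = 0)
    (hv : B i6 0 ≠ 0 ∧ B i6 1 ≠ 0 ∧ B i6 2 ≠ 0 ∧ B i6 3 ≠ 0 ∧ B i6 4 = 0 ∧ B i6 5 = 0)
    (h4 : B i4 0 = 0 ∧ B i4 1 = 0 ∧ B i4 2 ≠ 0 ∧ B i4 3 ≠ 0)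
    (h3 : B i3 0 = 0 ∧ B i3 1 ≠ 0 ∧ B i3 2 ≠ 0 ∧ B i3 3 = 0)
    (h2 : B i2 0 ≠ 0 ∧ B i2 1 ≠ 0 ∧ B i2 2 = 0 ∧ B i2 3 = 0) :
    False := by

  have hu4 := hu.2.2.2.2.1; have hu5 := hu.2.2.2.2.2
  have hv4 := hv.2.2.2.2.1; have hv5 := hv.2.2.2.2.2
  have h40 := h4.1; have h41 := h4.2.1
  have key : ∀ i j : Fin 6, i ≠ j →
      B i 0 * B j 0 + B i 1 * B j 1 + B i 2 * B j 2 + B i 3 * B j 3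
        + B i 4 * B j 4 + B i 5 * B j 5 = 0 := by
    intro i j hij
    have := congrFun (congrFun horth i) j
    simpa [Matrix.mul_apply, Fin.sum_univ_six, Matrix.one_apply, hij] using this
  have keyd : B i5 0 * B i5 0 + B i5 1 * B i5 1 + B i5 2 * B i5 2 + B i5 3 * B i5 3
        + B i5 4 * B i5 4 + B i5 5 * B i5 5 = 1 := by
    have := congrFun (congrFun horth i5) i5
    simpa [Matrix.mul_apply, Fin.sum_univ_six, Matrix.one_apply] using this
  have h25 := key i2 i5 hdist.2.2.1
  have h26 := key i2 i6 hdist.2.2.2.1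
  have h35 := key i3 i5 hdist.2.2.2.2.2.1
  have h36 := key i3 i6 hdist.2.2.2.2.2.2.1
  have h45 := key i4 i5 hdist.2.2.2.2.2.2.2.1
  have h46 := key i4 i6 hdist.2.2.2.2.2.2.2.2.1
  have h56 := key i5 i6 hdist.2.2.2.2.2.2.2.2.2
  rw [h2.2.2.1, h2.2.2.2, hu4, hu5] at h25
  rw [h2.2.2.1, h2.2.2.2, hv4, hv5] at h26
  rw [h3.1, h3.2.2.2, hu4, hu5] at h35
  rw [h3.1, h3.2.2.2, hv4, hv5] at h36
  rw [h40, h41, hu4, hu5] at h45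
  rw [h40, h41, hv4, hv5] at h46
  rw [hu4, hu5] at h56
  rw [hu4, hu5] at keyd
  have r1 : B i5 0 * B i6 1 - B i5 1 * B i6 0 = 0 := by
    have h : B i2 0 * (B i5 0 * B i6 1 - B i5 1 * B i6 0) = 0 := by
      linear_combination B i6 1 * h25 - B i5 1 * h26
    rcases mul_eq_zero.1 h with h' | h'
    · exact absurd h' h2.1
    · exact h'
  have r2 : B i5 1 * B i6 2 - B i5 2 * B i6 1 = 0 := by
    have h : B i3 1 * (B i5 1 * B i6 2 - B i5 2 * B i6 1) = 0 := by
      linear_combination B i6 2 * h35 - B i5 2 * h36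
    rcases mul_eq_zero.1 h with h' | h'
    · exact absurd h' h3.2.1
    · exact h'
  have r3 : B i5 2 * B i6 3 - B i5 3 * B i6 2 = 0 := by
    have h : B i4 2 * (B i5 2 * B i6 3 - B i5 3 * B i6 2) = 0 := by
      linear_combination B i6 3 * h45 - B i5 3 * h46
    rcases mul_eq_zero.1 h with h' | h'
    · exact absurd h' h4.2.2.1
    · exact h'
  have hbcx : B i5 1 * B i5 2 * B i6 0 = 0 := by
    linear_combination (B i5 0 * B i5 1 * B i5 2) * h56 - (B i5 1 * B i5 2 * B i6 0) * keyd
      - (B i5 1 ^ 2 * B i5 2 + B i5 2 ^ 3 + B i5 2 * B i5 3 ^ 2) * r1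
      - (B i5 0 * B i5 2 ^ 2 + B i5 0 * B i5 3 ^ 2) * r2
      - (B i5 0 * B i5 1 * B i5 3) * r3
  rcases mul_eq_zero.1 hbcx with h' | h'
  · rcases mul_eq_zero.1 h' with h'' | h''
    · exact hu.2.1 h''
    · exact hu.2.2.1 h''
  · exact hv.1 h'
end

section
/- The 7×7 matrix B = (1/2)·circ-type matrix with rows r_1 = (1,0,1,0,0,-1,1), r_2 = (1,1,0,1,0,0,-1), r_3 = (-1,1,1,0,1,0,0), r_4 = (0,-1,1,1,0,1,0), r_5 = (0,0,-1,1,1,0,1), r_6 = (1,0,0,-1,1,1,0), r_7 = (0,1,0,0,-1,1,1) satisfies B B^T = I. Consequently M = [[0, B],[B^T, 0]] is a symmetric orthogonal 14×14 matrix, and the bipartite graph R_{14,1} determined by the nonzero pattern of B satisfies q(R_{14,1}) = 2. -/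
/-!
Since `B Bᵀ = 1`, the block matrix `M = [[0, B], [Bᵀ, 0]]` squares to the identity. The spectrum
of an involution lies among the roots of `X² - 1`, and `±1` both occur unless `M = ∓1`: if
`1 ∓ M` were invertible, `(1 ∓ M)(1 ± M) = 1 - M² = 0` would force `M = ∓1`. Here `M` has zero
diagonal, so it is neither.
-/

open Matrix

noncomputable def B141 : Matrix (Fin 7) (Fin 7) ℝ :=
  (1 / 2 : ℝ) • !![1, 0, 1, 0, 0, -1, 1;
                   1, 1, 0, 1, 0, 0, -1;
                   -1, 1, 1, 0, 1, 0, 0;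
                   0, -1, 1, 1, 0, 1, 0;
                   0, 0, -1, 1, 1, 0, 1;
                   1, 0, 0, -1, 1, 1, 0;
                   0, 1, 0, 0, -1, 1, 1]

section Involution

variable {K A : Type*} [Field K] [Ring A] [Algebra K A] {a : A}

open Polynomial in
theorem spectrum_subset_of_mul_self_eq_one (ha : a * a = 1) : spectrum K a ⊆ {1, -1} := by
  nontriviality A
  refine Set.image_subset_iff.mp (spectrum.subset_polynomial_aeval a (X ^ 2 - 1)) |>.trans ?_
  intro x hx
  have hx : x ^ 2 = 1 := by simpa [pow_two, ha, sub_eq_zero] using hx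
  exact sq_eq_one_iff.mp hx

theorem one_mem_spectrum_of_mul_self_eq_one (ha : a * a = 1) (h : a ≠ -1) :
    (1 : K) ∈ spectrum K a := by
  rw [spectrum.mem_iff, map_one]
  rintro ⟨u, hu⟩
  have hprod : (u : A) * (1 + a) = 0 := by rw [hu, sub_mul, one_mul, mul_add, mul_one, ha]; abel
  exact h (eq_neg_of_add_eq_zero_right (by simpa using hprod))

theorem spectrum_eq_of_mul_self_eq_one (ha : a * a = 1) (h₁ : a ≠ 1) (h₂ : a ≠ -1) :
    spectrum K a = {1, -1} := by
  have hneg : (1 : K) ∈ spectrum K (-a) :=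
    one_mem_spectrum_of_mul_self_eq_one (by rwa [neg_mul_neg]) (by rwa [ne_eq, neg_inj])
  rw [← spectrum.neg_eq, Set.mem_neg] at hneg
  exact (spectrum_subset_of_mul_self_eq_one ha).antisymm
    (Set.pair_subset (one_mem_spectrum_of_mul_self_eq_one ha h₂) hneg)

end Involution

theorem fromBlocks_zero_transpose_mul_self {n R : Type*} [Fintype n] [DecidableEq n] [CommRing R]
    {B : Matrix n n R} (hB : B * Bᵀ = 1) :
    fromBlocks 0 B Bᵀ 0 * fromBlocks 0 B Bᵀ 0 = 1 := by
  rw [fromBlocks_multiply, ← fromBlocks_one]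
  simp [hB, mul_eq_one_comm.mp hB]

theorem B141_mul_transpose : B141 * B141ᵀ = 1 := by
  ext i j
  fin_cases i <;> fin_cases j <;>
    norm_num [B141, Matrix.mul_apply, Fin.sum_univ_succ, Matrix.one_apply]

/-- The explicit matrix `B = B141` satisfies `B Bᵀ = I`.
Consequently `M = [[0, B], [Bᵀ, 0]]` is a symmetric orthogonal `14 × 14` matrix
(with exactly the two distinct eigenvalues `1` and `-1`), so the bipartite graph
`R_{14,1}` determined by the nonzero pattern of `B` satisfies `q(R_{14,1}) = 2`. -/
theorem stmt_13 :
    B141 * B141ᵀ = 1 ∧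
    (Matrix.fromBlocks (0 : Matrix (Fin 7) (Fin 7) ℝ) B141 B141ᵀ 0).IsSymm ∧
    (Matrix.fromBlocks (0 : Matrix (Fin 7) (Fin 7) ℝ) B141 B141ᵀ 0) *
      (Matrix.fromBlocks (0 : Matrix (Fin 7) (Fin 7) ℝ) B141 B141ᵀ 0) = 1 ∧
    spectrum ℝ (Matrix.fromBlocks (0 : Matrix (Fin 7) (Fin 7) ℝ) B141 B141ᵀ 0) = {1, -1} := by
  have hM : fromBlocks 0 B141 B141ᵀ 0 * fromBlocks 0 B141 B141ᵀ 0 = 1 :=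
    fromBlocks_zero_transpose_mul_self B141_mul_transpose
  refine ⟨B141_mul_transpose, IsSymm.fromBlocks isSymm_zero rfl isSymm_zero, hM,
    spectrum_eq_of_mul_self_eq_one hM ?_ ?_⟩
  all_goals
    intro h
    simpa using congr_fun₂ h (.inl 0) (.inl 0)
end

section
/- If G is a connected graph on n vertices such that there exists a symmetric matrix A ∈ S(G) with exactly two distinct eigenvalues, and every matrix in S(G) with two distinct eigenvalues has multiplicities k and n-k with k ≤ n/2, then every independent set S of vertices of G satisfies |S| ≤ k where k is the least integer such that some matrix in S(G) has two distinct eigenvalues with multiplicities k and n-k. -/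
open Matrix

/-- `A` belongs to `S(G)`: it is symmetric and its off-diagonal nonzero pattern
matches the adjacency of `G`. -/
def MemSG {n : ℕ} (G : SimpleGraph (Fin n)) (A : Matrix (Fin n) (Fin n) ℝ) : Prop :=
  A.IsSymm ∧ ∀ u v : Fin n, u ≠ v → (A u v ≠ 0 ↔ G.Adj u v)

/-- `A` has exactly two distinct eigenvalues, with multiplicities `k` and `n - k`. -/
def TwoDistinctEigs {n : ℕ} (A : Matrix (Fin n) (Fin n) ℝ) (k : ℕ) : Prop :=
  ∃ (hA : A.IsHermitian) (μ₁ μ₂ : ℝ), μ₁ ≠ μ₂ ∧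
    (∀ i, hA.eigenvalues i = μ₁ ∨ hA.eigenvalues i = μ₂) ∧
    Nat.card {i // hA.eigenvalues i = μ₁} = k ∧
    Nat.card {i // hA.eigenvalues i = μ₂} = n - k

/-! A matrix `A ∈ S(G)` realising `k` also realises `n - k` (swap the two eigenvalues), so
`n = 2k`. If an independent set `S` had more than `k` vertices, the `k`-dimensional
`μ₂`-eigenspace would meet the space of vectors supported on `S`; for such an eigenvector `x`
and `u` with `x u ≠ 0`, independence of `S` gives `A u u = μ₂`. The `(u, u)` entry of
`(A - μ₁)(A - μ₂) = 0` then reads `∑_{w ≠ u} (A u w)² = 0`, so `u` is isolated in `G`,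
contradicting connectivity. -/

namespace Matrix

variable {n R : Type*} [Fintype n]

theorem diag_eq_of_mulVec_eq_smul [CommRing R] [NoZeroDivisors R] {A : Matrix n n R}
    {S : Finset n} (hAS : ∀ u ∈ S, ∀ v ∈ S, u ≠ v → A u v = 0) {x : n → R}
    (hxS : ∀ i ∉ S, x i = 0) {μ : R} (hAx : A *ᵥ x = μ • x) {u : n} (hxu : x u ≠ 0) :
    A u u = μ := by
  have hu : u ∈ S := by_contra fun hu => hxu (hxS u hu)
  have hrow : (A *ᵥ x) u = A u u * x u := by
    refine Finset.sum_eq_single u (fun v _ hvu => ?_) (by simp)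
    by_cases hv : v ∈ S
    · simp [hAS u hu v hv hvu.symm]
    · simp [hxS v hv]
  rw [hAx, Pi.smul_apply, smul_eq_mul] at hrow
  exact mul_right_cancel₀ hxu hrow.symm

variable [CommRing R] [LinearOrder R] [IsStrictOrderedRing R] {A : Matrix n n R}

theorem IsSymm.apply_eq_zero_of_mul_self_apply_eq_zero (hA : A.IsSymm) {u : n}
    (h : (A * A) u u = 0) (w : n) : A u w = 0 := by
  simp_rw [mul_apply, hA.apply u, ← pow_two] at h
  exact pow_eq_zero_iff two_ne_zero |>.mp <|
    (Finset.sum_eq_zero_iff_of_nonneg fun _ _ => sq_nonneg _).mp h w (Finset.mem_univ w)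

theorem IsSymm.apply_eq_zero_of_sub_smul_one_mul_sub_smul_one_eq_zero [DecidableEq n]
    (hA : A.IsSymm) {a b : R} (h : (A - a • 1) * (A - b • 1) = 0) {u : n} (hu : A u u = b) {w : n}
    (hw : u ≠ w) : A u w = 0 := by
  have hsq : ((A - b • 1) * (A - b • 1)) u u = 0 := by
    have hsplit : A - a • 1 = (A - b • 1) + (b - a) • 1 := by rw [sub_smul]; abel
    have := congrFun (congrFun h u) u
    rw [hsplit, add_mul, smul_mul_assoc, one_mul] at this
    simpa [hu] using this
  simpa [hw] using (hA.sub (isSymm_one.smul b)).apply_eq_zero_of_mul_self_apply_eq_zero hsq w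

end Matrix

namespace Matrix.IsHermitian

variable {𝕜 n : Type*} [RCLike 𝕜] [Fintype n] [DecidableEq n] {A : Matrix n n 𝕜}

theorem sub_smul_one_mul_sub_smul_one_eq_zero (hA : A.IsHermitian) {μ₁ μ₂ : ℝ}
    (h : ∀ i, hA.eigenvalues i = μ₁ ∨ hA.eigenvalues i = μ₂) :
    (A - μ₁ • 1) * (A - μ₂ • 1) = 0 := by
  have hcfc : cfc (fun x : ℝ => (x - μ₁) * (x - μ₂)) A = 0 := by
    rw [← cfc_zero ℝ A]
    refine cfc_congr ?_
    rw [hA.spectrum_real_eq_range_eigenvalues]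
    rintro _ ⟨i, rfl⟩
    rcases h i with hi | hi <;> simp [hi]
  rwa [cfc_mul .., cfc_sub .., cfc_sub .., cfc_id' .., cfc_const .., cfc_const ..,
    Algebra.algebraMap_eq_smul_one, Algebra.algebraMap_eq_smul_one] at hcfc

theorem exists_eigenvector_support_subset (hA : A.IsHermitian) (μ : ℝ) (S : Finset n)
    (hcard : Fintype.card n < Nat.card {i // hA.eigenvalues i = μ} + S.card) :
    ∃ x : n → 𝕜, x ≠ 0 ∧ A *ᵥ x = (μ : 𝕜) • x ∧ ∀ i ∉ S, x i = 0 := by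
  let v : {i // hA.eigenvalues i = μ} → n → 𝕜 := fun i => ⇑(hA.eigenvectorBasis i)
  have hv : LinearIndependent 𝕜 v :=
    (hA.eigenvectorBasis.orthonormal.linearIndependent.map' _
      (WithLp.linearEquiv 2 𝕜 (n → 𝕜)).ker).comp _ Subtype.val_injective
  let V := Submodule.span 𝕜 (Set.range v)
  have hVeig : ∀ x ∈ V, A *ᵥ x = (μ : 𝕜) • x := by
    have : V ≤ Module.End.eigenspace (toLin' A) (μ : 𝕜) := by
      refine Submodule.span_le.mpr ?_
      rintro _ ⟨i, rfl⟩
      rw [SetLike.mem_coe, Module.End.mem_eigenspace_iff, toLin'_apply,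
        hA.mulVec_eigenvectorBasis, i.2, RCLike.real_smul_eq_coe_smul (K := 𝕜)]
    exact fun x hx => Module.End.mem_eigenspace_iff.mp (this hx)
  let restrict : V →ₗ[𝕜] ({i // i ∉ S} → 𝕜) := LinearMap.funLeft 𝕜 𝕜 Subtype.val ∘ₗ V.subtype
  have hker : LinearMap.ker restrict ≠ ⊥ := by
    refine LinearMap.ker_ne_bot_of_finrank_lt ?_
    rw [finrank_span_eq_card hv, Module.finrank_fintype_fun_eq_card, Fintype.card_subtype_compl,
      Fintype.card_coe]
    rw [Nat.card_eq_fintype_card] at hcard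
    have := S.card_le_univ
    omega
  obtain ⟨⟨x, hxV⟩, hx, hx0⟩ := (Submodule.ne_bot_iff _).mp hker
  refine ⟨x, fun h => hx0 (by simpa using h), hVeig x hxV, fun i hi => ?_⟩
  exact congrFun (LinearMap.mem_ker.mp hx) ⟨i, hi⟩

end Matrix.IsHermitian

section

variable {n : ℕ} {A : Matrix (Fin n) (Fin n) ℝ}

theorem MemSG.apply_eq_zero_of_not_adj {G : SimpleGraph (Fin n)} (h : MemSG G A) {u v : Fin n}
    (huv : u ≠ v) (hadj : ¬G.Adj u v) : A u v = 0 :=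
  not_not.mp (mt (h.2 u v huv).mp hadj)

theorem MemSG.apply_ne_zero_of_adj {G : SimpleGraph (Fin n)} (h : MemSG G A) {u v : Fin n}
    (hadj : G.Adj u v) : A u v ≠ 0 :=
  (h.2 u v hadj.ne).mpr hadj

theorem TwoDistinctEigs.le {k : ℕ} (h : TwoDistinctEigs A k) : k ≤ n := by
  obtain ⟨-, μ₁, -, -, -, rfl, -⟩ := h
  exact (Finite.card_subtype_le _).trans (Nat.card_fin n).le

theorem TwoDistinctEigs.symm {k : ℕ} (h : TwoDistinctEigs A k) : TwoDistinctEigs A (n - k) := by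
  have hk := h.le
  obtain ⟨hA, μ₁, μ₂, hμ, hall, hk₁, hk₂⟩ := h
  exact ⟨hA, μ₂, μ₁, hμ.symm, fun i => (hall i).symm, hk₂, by omega⟩

end

theorem stmt_16_general {n : ℕ} (G : SimpleGraph (Fin n)) (hconn : G.Connected)
    (hhalf : ∀ (A : Matrix (Fin n) (Fin n) ℝ) (k' : ℕ),
      MemSG G A → TwoDistinctEigs A k' → 2 * k' ≤ n)
    (k : ℕ)
    (hk : IsLeast {k' : ℕ | ∃ A : Matrix (Fin n) (Fin n) ℝ, MemSG G A ∧ TwoDistinctEigs A k'} k)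
    (S : Finset (Fin n)) (hS : ∀ u ∈ S, ∀ v ∈ S, ¬ G.Adj u v) :
    S.card ≤ k := by
  obtain ⟨A, hAG, hAk⟩ := hk.1
  have hn : n = 2 * k := by
    have := hhalf A k hAG hAk
    have := hhalf A (n - k) hAG hAk.symm
    have := hAk.le
    omega
  obtain ⟨hA, μ₁, μ₂, -, hall, -, hμ₂⟩ := hAk
  by_contra! hSk
  obtain ⟨x, hx0, hAx, hxS⟩ :=
    hA.exists_eigenvector_support_subset μ₂ S (by rw [hμ₂, Fintype.card_fin]; omega)
  obtain ⟨u, hxu⟩ := Function.ne_iff.mp hx0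
  have hAuu : A u u = μ₂ :=
    diag_eq_of_mulVec_eq_smul
      (fun v hv w hw hvw => hAG.apply_eq_zero_of_not_adj hvw (hS v hv w hw)) hxS
      (by simpa using hAx) hxu
  have hSn : S.card ≤ n := by simpa using S.card_le_univ
  have : Nontrivial (Fin n) := Fin.nontrivial_iff_two_le.mpr (by omega)
  obtain ⟨w, hw⟩ := hconn.preconnected.exists_adj_of_nontrivial u
  exact hAG.apply_ne_zero_of_adj hw <|
    hAG.1.apply_eq_zero_of_sub_smul_one_mul_sub_smul_one_eq_zero
      (hA.sub_smul_one_mul_sub_smul_one_eq_zero hall) hAuu hw.ne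

/-- Let `G` be a connected graph on `n` vertices such that some
matrix in `S(G)` has exactly two distinct eigenvalues, and every matrix in `S(G)`
with two distinct eigenvalues has multiplicities `k'` and `n - k'` with `k' ≤ n/2`.
If `k` is the least integer such that some matrix in `S(G)` has two distinct
eigenvalues with multiplicities `k` and `n - k`, then every independent set `S`
of `G` satisfies `|S| ≤ k`. -/
theorem stmt_16 {n : ℕ} (G : SimpleGraph (Fin n)) (hconn : G.Connected)
    (hex : ∃ (A : Matrix (Fin n) (Fin n) ℝ) (k' : ℕ), MemSG G A ∧ TwoDistinctEigs A k')
    (hhalf : ∀ (A : Matrix (Fin n) (Fin n) ℝ) (k' : ℕ),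
      MemSG G A → TwoDistinctEigs A k' → 2 * k' ≤ n)
    (k : ℕ)
    (hk : IsLeast {k' : ℕ | ∃ A : Matrix (Fin n) (Fin n) ℝ, MemSG G A ∧ TwoDistinctEigs A k'} k)
    (S : Finset (Fin n)) (hS : ∀ u ∈ S, ∀ v ∈ S, ¬ G.Adj u v) :
    S.card ≤ k :=
  stmt_16_general G hconn hhalf k hk S hS
end
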